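/- Under the same Kou-model setup with η₁ > 1, the truncated LETF jump multiplier satisfies E[ξ^ℓ] = p·η₁/(η₁−1) + (1−p)·η₂·[ϑ^{η₂+1}/η₂ + (1 − ϑ^{η₂+1})/(η₂+1)], where ϑ = (β−1)/β. -/

import Mathlib

/-!
On each of `(0, ϑ)`, `(ϑ, 1)` and `(1, ∞)` the integrand `ξ^ℓ · G` is a multiple of a single power
of `x` (namely `ϑ x^{η₂-1}`, `x^{η₂}` and `x^{-η₁}`), so the expectation is a sum of three
elementary power integrals; `η₁ > 1` makes the tail integral converge.
-/

open MeasureTheory Set intervalIntegral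

noncomputable def kouDensity (p η₁ η₂ x : ℝ) : ℝ :=
  if 1 ≤ x then p * η₁ * x ^ (-η₁ - 1) else (1 - p) * η₂ * x ^ (η₂ - 1)

noncomputable def truncBelow (ϑ x : ℝ) : ℝ := if ϑ < x then x else ϑ

section KouTruncated

variable {p η₁ η₂ ϑ : ℝ}

lemma truncBelow_mul_kouDensity_eqOn_Iio (hϑ : ϑ ≤ 1) :
    EqOn (fun x => truncBelow ϑ x * kouDensity p η₁ η₂ x)
      (fun x => ϑ * ((1 - p) * η₂) * x ^ (η₂ - 1)) (Iio ϑ) := by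
  intro x (hx : x < ϑ)
  simp only [truncBelow, kouDensity, if_neg hx.not_gt, if_neg (hx.trans_le hϑ).not_ge]
  ring

lemma truncBelow_mul_kouDensity_eqOn_Ioo (hϑ : 0 ≤ ϑ) :
    EqOn (fun x => truncBelow ϑ x * kouDensity p η₁ η₂ x)
      (fun x => (1 - p) * η₂ * x ^ η₂) (Ioo ϑ 1) := by
  rintro x ⟨hϑx, hx1⟩
  have hx : x ≠ 0 := (hϑ.trans_lt hϑx).ne'
  simp only [truncBelow, kouDensity, if_pos hϑx, if_neg hx1.not_ge]
  rw [show η₂ = (η₂ - 1) + 1 by ring, Real.rpow_add_one hx]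
  ring_nf

lemma truncBelow_mul_kouDensity_eqOn_Ioi (hϑ : ϑ ≤ 1) :
    EqOn (fun x => truncBelow ϑ x * kouDensity p η₁ η₂ x)
      (fun x => p * η₁ * x ^ (-η₁)) (Ioi 1) := by
  intro x (hx : 1 < x)
  simp only [truncBelow, kouDensity, if_pos (hϑ.trans_lt hx), if_pos hx.le]
  rw [show -η₁ = (-η₁ - 1) + 1 by ring, Real.rpow_add_one (by positivity)]
  ring_nf

lemma integral_Ioi_truncBelow_mul_kouDensity_eq_add (hϑ0 : 0 ≤ ϑ) (hϑ1 : ϑ ≤ 1)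
    (hη₁ : 1 < η₁) (hη₂ : 0 < η₂) :
    ∫ x in Ioi 0, truncBelow ϑ x * kouDensity p η₁ η₂ x =
      (∫ x in 0..ϑ, ϑ * ((1 - p) * η₂) * x ^ (η₂ - 1)) +
        (∫ x in ϑ..1, (1 - p) * η₂ * x ^ η₂) + ∫ x in Ioi 1, p * η₁ * x ^ (-η₁) := by
  have h₁ := (truncBelow_mul_kouDensity_eqOn_Iio (p := p) (η₁ := η₁) (η₂ := η₂) hϑ1).mono
    (Ioo_subset_Iio_self (a := 0))
  have h₂ := truncBelow_mul_kouDensity_eqOn_Ioo (p := p) (η₁ := η₁) (η₂ := η₂) hϑ0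
  have h₃ := truncBelow_mul_kouDensity_eqOn_Ioi (p := p) (η₁ := η₁) (η₂ := η₂) hϑ1
  have hi₁ : IntervalIntegrable (fun x => truncBelow ϑ x * kouDensity p η₁ η₂ x) volume 0 ϑ :=
    ((intervalIntegrable_rpow' (by linarith)).const_mul _).congr_uIoo
      (uIoo_of_le hϑ0 ▸ h₁.symm)
  have hi₂ : IntervalIntegrable (fun x => truncBelow ϑ x * kouDensity p η₁ η₂ x) volume ϑ 1 :=
    ((intervalIntegrable_rpow' (by linarith)).const_mul _).congr_uIoo
      (uIoo_of_le hϑ1 ▸ h₂.symm)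
  have hi₃ : IntegrableOn (fun x => truncBelow ϑ x * kouDensity p η₁ η₂ x) (Ioi 1) :=
    IntegrableOn.congr_fun ((integrableOn_Ioi_rpow_of_lt (by linarith) one_pos).const_mul _)
      h₃.symm measurableSet_Ioi
  rw [← integral_interval_add_Ioi' (hi₁.trans hi₂) hi₃, ← integral_add_adjacent_intervals hi₁ hi₂,
    integral_congr_Ioo_of_le hϑ0 h₁, integral_congr_Ioo_of_le hϑ1 h₂,
    setIntegral_congr_fun measurableSet_Ioi h₃]

theorem integral_Ioi_truncBelow_mul_kouDensity (hϑ0 : 0 ≤ ϑ) (hϑ1 : ϑ ≤ 1)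
    (hη₁ : 1 < η₁) (hη₂ : 0 < η₂) :
    ∫ x in Ioi 0, truncBelow ϑ x * kouDensity p η₁ η₂ x =
      p * η₁ / (η₁ - 1) +
        (1 - p) * η₂ * (ϑ ^ (η₂ + 1) / η₂ + (1 - ϑ ^ (η₂ + 1)) / (η₂ + 1)) := by
  have hlow : ∫ x in 0..ϑ, x ^ (η₂ - 1) = ϑ ^ η₂ / η₂ := by
    rw [integral_rpow (Or.inl (by linarith)), sub_add_cancel, Real.zero_rpow hη₂.ne', sub_zero]
  have hmid : ∫ x in ϑ..1, x ^ η₂ = (1 - ϑ ^ (η₂ + 1)) / (η₂ + 1) := by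
    rw [integral_rpow (Or.inl (by linarith)), Real.one_rpow]
  have htail : ∫ x in Ioi 1, x ^ (-η₁) = 1 / (η₁ - 1) := by
    rw [integral_Ioi_rpow_of_lt (by linarith) one_pos, Real.one_rpow,
      show -η₁ + 1 = -(η₁ - 1) by ring, div_neg, neg_div, neg_neg]
  rw [integral_Ioi_truncBelow_mul_kouDensity_eq_add hϑ0 hϑ1 hη₁ hη₂,
    intervalIntegral.integral_const_mul, intervalIntegral.integral_const_mul,
    MeasureTheory.integral_const_mul, hlow, hmid, htail, Real.rpow_add_one' hϑ0 (by linarith)]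
  field_simp
  ring

end KouTruncated

theorem kou_expectation_xi_l_general (β p η₁ η₂ : ℝ) (hβ : 1 < β)
    (hη₁ : 1 < η₁) (hη₂ : 0 < η₂) :
    let ϑ : ℝ := (β - 1) / β
    let G : ℝ → ℝ := fun x =>
      if 1 ≤ x then p * η₁ * x ^ (-η₁ - 1) else (1 - p) * η₂ * x ^ (η₂ - 1)
    let ξl : ℝ → ℝ := fun x => if ϑ < x then x else ϑ
    ∫ x in Set.Ioi (0 : ℝ), ξl x * G x =
      p * η₁ / (η₁ - 1) +
        (1 - p) * η₂ *
          (ϑ ^ (η₂ + 1) / η₂ + (1 - ϑ ^ (η₂ + 1)) / (η₂ + 1)) := by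
  intro ϑ G ξl
  have hβ0 : 0 < β := one_pos.trans hβ
  exact integral_Ioi_truncBelow_mul_kouDensity (div_nonneg (by linarith) hβ0.le)
    (div_le_one_of_le₀ (by linarith) hβ0.le) hη₁ hη₂

/-- Under the Kou jump density with `η₁ > 1`, the truncated LETF
jump multiplier `ξ^ℓ` (truncation of `ξ^s` at `ϑ = (β−1)/β`) satisfies
`E[ξ^ℓ] = p η₁/(η₁−1) + (1−p) η₂ (ϑ^{η₂+1}/η₂ + (1−ϑ^{η₂+1})/(η₂+1))`. -/
theorem kou_expectation_xi_l (β p η₁ η₂ : ℝ) (hβ : 1 < β)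
    (hp0 : 0 ≤ p) (hp1 : p ≤ 1) (hη₁ : 1 < η₁) (hη₂ : 0 < η₂) :
    let ϑ : ℝ := (β - 1) / β
    let G : ℝ → ℝ := fun x =>
      if 1 ≤ x then p * η₁ * x ^ (-η₁ - 1) else (1 - p) * η₂ * x ^ (η₂ - 1)
    let ξl : ℝ → ℝ := fun x => if ϑ < x then x else ϑ
    ∫ x in Set.Ioi (0 : ℝ), ξl x * G x =
      p * η₁ / (η₁ - 1) +
        (1 - p) * η₂ *
          (ϑ ^ (η₂ + 1) / η₂ + (1 - ϑ ^ (η₂ + 1)) / (η₂ + 1)) :=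
  kou_expectation_xi_l_general β p η₁ η₂ hβ hη₁ hη₂
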